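/- arXiv:math/9811028 — 4 statements merged into one kernel-verified Lean document; each statement's English description precedes it below -/
import Mathlib

section
/- Let f₀ and f∞ be Laurent polynomials over ℚ in the variable A and set f⋆ := (A^{2} - A^{-2}) * f₀ + (A^{4} - A^{-4}) * f∞ (where A^{j} denotes the Laurent monomial T j). Then for every natural number n, v_n(f⋆) = Σ_{k=0}^{n-1} c_{n,k} * ( v_k(f₀) + 2^{n-k} * v_k(f∞) ), where c_{n,k} := 2^{n-k} * (1 + (-1)^{n-k+1}) / (n-k)!, and where for a Laurent polynomial f over ℚ we define v_n(f) := (1/n!) * Σ_{j ∈ ℤ} (f.coeff j) * j^n (a finite sum over the support of f). -/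
open LaurentPolynomial

/-- For a Laurent polynomial `f` over `ℚ` in the variable `A`,
`v n f := (1/n!) * ∑ j, (coeff of A^j in f) * j^n` is the `n`-th Taylor
coefficient of `x ↦ f(e^x)` at `0`. -/
noncomputable def v (n : ℕ) (f : LaurentPolynomial ℚ) : ℚ :=
  (1 / (n.factorial : ℚ)) * ∑ j ∈ f.coeff.support, f.coeff j * (j : ℚ) ^ n

/-- The coefficients `c_{n,k} = 2^{n-k} (1 + (-1)^{n-k+1}) / (n-k)!` of
Theorem 13. -/
noncomputable def cCoeff (n k : ℕ) : ℚ :=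
  2 ^ (n - k) * (1 + (-1 : ℚ) ^ (n - k + 1)) / ((n - k).factorial : ℚ)

/-!
Since `v n f` is the `n`-th Taylor coefficient of `x ↦ f(e^x)` at `0`, the Taylor coefficients of a
product are the Cauchy product `v n (g * f) = ∑ₖ v (n - k) g * v k f`. For `g = A^a - A^{-a}` we
have `v m g = a^m (1 - (-1)^m) / m!`, which vanishes at `m = 0` and equals `c_{n,k}` resp.
`2^{n-k} c_{n,k}` at `m = n - k` for `a = 2` resp. `a = 4`.
-/

open Finset

lemma v_eq_sum (n : ℕ) (f : LaurentPolynomial ℚ) :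
    v n f = (n.factorial : ℚ)⁻¹ * f.coeff.sum (fun j c => c * (j : ℚ) ^ n) := by
  rw [v, one_div]; rfl

lemma v_add (n : ℕ) (f g : LaurentPolynomial ℚ) : v n (f + g) = v n f + v n g := by
  simp only [v_eq_sum, ← mul_add, AddMonoidAlgebra.coeff_add]
  rw [Finsupp.sum_add_index' (by simp) (fun _ _ _ => add_mul _ _ _)]

lemma v_sub (n : ℕ) (f g : LaurentPolynomial ℚ) : v n (f - g) = v n f - v n g := by
  simp only [v_eq_sum, ← mul_sub, AddMonoidAlgebra.coeff_sub]
  rw [Finsupp.sum_sub_index (fun _ _ _ => sub_mul _ _ _)]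

lemma v_C_mul (n : ℕ) (c : ℚ) (f : LaurentPolynomial ℚ) : v n (C c * f) = c * v n f := by
  rw [← smul_eq_C_mul, v_eq_sum, v_eq_sum, AddMonoidAlgebra.coeff_smul,
    Finsupp.sum_smul_index (by simp), Finsupp.mul_sum, Finsupp.mul_sum, Finsupp.mul_sum]
  exact Finsupp.sum_congr fun _ _ => by ring

lemma v_T (n : ℕ) (a : ℤ) : v n (T a) = (a : ℚ) ^ n / n.factorial := by
  rw [v_eq_sum, T, AddMonoidAlgebra.coeff_single, Finsupp.sum_single_index (by simp)]
  ring

lemma coeff_T_mul (a : ℤ) (f : LaurentPolynomial ℚ) :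
    (T a * f).coeff = Finsupp.mapDomain (a + ·) f.coeff := by
  ext j
  rw [T, AddMonoidAlgebra.coeff_single_mul_apply,
    show ((a + ·) : ℤ → ℤ) = ⇑(Equiv.addLeft a) from rfl, Finsupp.mapDomain_equiv_apply]
  simp

lemma v_T_mul (n : ℕ) (a : ℤ) (f : LaurentPolynomial ℚ) :
    v n (T a * f) = ∑ k ∈ range (n + 1), v (n - k) (T a) * v k f := by
  have binomial (j : ℤ) : (n.factorial : ℚ)⁻¹ * ((a + j : ℤ) : ℚ) ^ n =
      ∑ k ∈ range (n + 1), v (n - k) (T a) * ((k.factorial : ℚ)⁻¹ * (j : ℚ) ^ k) := by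
    rw [Int.cast_add, add_comm, add_pow, mul_sum]
    refine sum_congr rfl fun k hk => ?_
    rw [v_T, Nat.cast_choose ℚ (mem_range_succ_iff.mp hk)]
    field_simp
  rw [v_eq_sum, coeff_T_mul, Finsupp.sum_mapDomain_index (by simp) (fun _ _ _ => add_mul _ _ _),
    Finsupp.mul_sum]
  calc (f.coeff.sum fun j c => (n.factorial : ℚ)⁻¹ * (c * ((a + j : ℤ) : ℚ) ^ n))
      = f.coeff.sum fun j c =>
          ∑ k ∈ range (n + 1), v (n - k) (T a) * ((k.factorial : ℚ)⁻¹ * (c * (j : ℚ) ^ k)) :=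
        Finsupp.sum_congr fun j _ => by
          simp only [mul_left_comm _ (f.coeff j), binomial, mul_sum]
    _ = ∑ k ∈ range (n + 1), v (n - k) (T a) * v k f := by
      simp only [Finsupp.sum, v_eq_sum, mul_sum]
      exact sum_comm

theorem v_mul (n : ℕ) (g f : LaurentPolynomial ℚ) :
    v n (g * f) = ∑ k ∈ range (n + 1), v (n - k) g * v k f := by
  induction g using LaurentPolynomial.induction_on' with
  | add p q hp hq => simp only [add_mul, v_add, hp, hq, sum_add_distrib]
  | C_mul_T m c => simp only [mul_assoc, v_C_mul, v_T_mul, mul_sum]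

lemma v_T_sub_T_neg (m : ℕ) (a : ℤ) :
    v m (T a - T (-a)) = (a : ℚ) ^ m * (1 + (-1) ^ (m + 1)) / m.factorial := by
  rw [v_sub, v_T, v_T, Int.cast_neg, neg_pow, pow_succ]
  ring

/-- Theorem 13 (recursion form): for `f⋆ = (A² - A⁻²) f₀ + (A⁴ - A⁻⁴) fI`,
`v_n(f⋆) = ∑_{k=0}^{n-1} c_{n,k} (v_k(f₀) + 2^{n-k} v_k(fI))`. -/
theorem stmt3 (f₀ fI : LaurentPolynomial ℚ) (n : ℕ) :
    v n ((T 2 - T (-2)) * f₀ + (T 4 - T (-4)) * fI) =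
      ∑ k ∈ Finset.range n, cCoeff n k * (v k f₀ + 2 ^ (n - k) * v k fI) := by
  have h₂ (k : ℕ) : v (n - k) (T 2 - T (-2)) = cCoeff n k := by
    rw [v_T_sub_T_neg, cCoeff]; norm_num
  have h₄ (k : ℕ) : v (n - k) (T 4 - T (-4)) = cCoeff n k * 2 ^ (n - k) := by
    rw [v_T_sub_T_neg, cCoeff, show ((4 : ℤ) : ℚ) = 2 * 2 by norm_num, mul_pow]; ring
  have h₀ : cCoeff n n = 0 := by simp [cCoeff]
  rw [v_add, v_mul, v_mul, ← sum_add_distrib, sum_range_succ]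
  simp only [h₂, h₄, h₀, zero_mul, add_zero]
  exact sum_congr rfl fun k _ => by ring
end

section
/- Work over the ring R = LaurentPolynomial ℂ, with A = T 1, A⁻¹ = T (-1), and i = Complex.I regarded as a constant in R. Let M : Matrix (Fin 2) (Fin 2) R be the matrix with M 0 0 = 0, M 0 1 = i·A, M 1 0 = -i·A⁻¹, M 1 1 = 0. Define matrices ℛ and ℛ̄ indexed by Fin 2 × Fin 2 by ℛ (a,b) (c,d) = A · (M a b) · (M c d) + A⁻¹ · (if a = c ∧ b = d then 1 else 0) and ℛ̄ (a,b) (c,d) = A⁻¹ · (M a b) · (M c d) + A · (if a = c ∧ b = d then 1 else 0). Then ℛ * ℛ̄ = 1 (the identity matrix on Fin 2 × Fin 2). -/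
open LaurentPolynomial

/-- The crossing matrices `ℛ` and `ℛ̄` of the quantum tensor model for the
bracket polynomial, defined by the smoothing identities
`R^{ab}_{cd} = A M_{ab} M_{cd} + A⁻¹ δ^a_c δ^b_d` and
`R̄^{ab}_{cd} = A⁻¹ M_{ab} M_{cd} + A δ^a_c δ^b_d`, where `M` is the cup/cap
matrix, satisfy `ℛ * ℛ̄ = 1` (invariance under the second Reidemeister move). -/
theorem stmt5 (M : Matrix (Fin 2) (Fin 2) (LaurentPolynomial ℂ))
    (h00 : M 0 0 = 0)
    (h01 : M 0 1 = C Complex.I * T 1)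
    (h10 : M 1 0 = -(C Complex.I) * T (-1))
    (h11 : M 1 1 = 0)
    (R Rbar : Matrix (Fin 2 × Fin 2) (Fin 2 × Fin 2) (LaurentPolynomial ℂ))
    (hR : ∀ a b c d : Fin 2, R (a, b) (c, d) =
      T 1 * (M a b) * (M c d) + T (-1) * (if a = c ∧ b = d then 1 else 0))
    (hRbar : ∀ a b c d : Fin 2, Rbar (a, b) (c, d) =
      T (-1) * (M a b) * (M c d) + T 1 * (if a = c ∧ b = d then 1 else 0)) :
    R * Rbar = 1 := by
  have hI : (C Complex.I : LaurentPolynomial ℂ) * C Complex.I = -1 := by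
    rw [← map_mul, Complex.I_mul_I, map_neg, map_one]
  have h2 : (C Complex.I : LaurentPolynomial ℂ) ^ 2 = -1 := by rw [sq, hI]
  have h4 : (C Complex.I : LaurentPolynomial ℂ) ^ 4 = 1 := by
    rw [show (4:ℕ) = 2*2 from rfl, pow_mul, h2]; ring
  have hst : (T 1 : LaurentPolynomial ℂ) * T (-1) = 1 := by
    rw [← T_add]; norm_num
  have hT2 : (T 2 : LaurentPolynomial ℂ) = T 1 * T 1 := by
    rw [show (2:ℤ) = 1 + 1 from rfl, T_add]
  have hTm2 : (T (-2) : LaurentPolynomial ℂ) = T (-1) * T (-1) := by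
    rw [show (-2:ℤ) = -1 + -1 from rfl, T_add]
  apply Matrix.ext
  rintro ⟨a, b⟩ ⟨c, d⟩
  rw [Matrix.mul_apply, Fintype.sum_prod_type]
  simp only [Fin.sum_univ_two, hR, hRbar, Matrix.one_apply, Prod.mk.injEq]
  fin_cases a <;> fin_cases b <;> fin_cases c <;> fin_cases d <;>
    simp only [Fin.mk_zero, Fin.mk_one, h00, h01, h10, h11, Fin.zero_eq_one_iff,
      Fin.one_eq_zero_iff, Nat.succ_ne_self, and_true, and_false, true_and, false_and,
      if_true, if_false, and_self, Fin.isValue, ne_eq, OfNat.ofNat_ne_one,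
      not_false_eq_true, one_ne_zero, zero_ne_one, ite_true, ite_false,
      mul_zero, zero_mul, mul_one, add_zero, zero_add]
  all_goals try ring_nf
  all_goals try simp only [h2, h4, hT2, hTm2]
  all_goals (first
    | ring1
    | linear_combination hst
    | linear_combination (1 + (T 1 : LaurentPolynomial ℂ) ^ 2 * T (-1) ^ 2 + T 1 ^ 4) * hst
    | linear_combination (-(T 1 : LaurentPolynomial ℂ) * T (-1) ^ 3 - T 1 ^ 3 * T (-1)) * hst
    | linear_combination (1 + (T 1 : LaurentPolynomial ℂ) ^ 2 * T (-1) ^ 2 + T (-1) ^ 4) * hst)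
end

section
/- Let R = LaurentPolynomial ℤ with t = T 1 and t⁻¹ = T (-1). Let N be the R-submodule of R × R spanned by the three elements (1, t - 1), (-t, 1), and (1 - t⁻¹, t⁻¹). Then the quotient module (R × R) ⧸ N has exactly 3 elements, and moreover t • x = x + x for every element x of the quotient. -/
/-!
Write `m` for the class of `(1, 0)`. The relation `(-t, 1)` gives `[(p, q)] = (p + t q) • m`, so
the module is cyclic, generated by `m`. The other two relations give `(t² - t + 1) • m = 0` and
`(2t - 1) • m = 0`, hence `3 • m = 0` and `(t + 1) • m = 0`. Thus `t` acts as `-1`, every Laurent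
polynomial `r` acts as the integer `r(-1)`, and the module is the cyclic group generated by `m`,
of order `3`. That `m ≠ 0` is seen from the invariant `(p, q) ↦ (p + t q)(-1) mod 3`, which
vanishes on the relations.
-/

open LaurentPolynomial

theorem LaurentPolynomial.ringHom_ext {R S : Type*} [Semiring R] [Semiring S]
    {f g : R[T;T⁻¹] →+* S} (hC : f.comp C = g.comp C) (hT : f (T 1) = g (T 1)) : f = g :=
  AddMonoidAlgebra.ringHom_ext' hC (MonoidHom.ext_mint hT)

theorem LaurentPolynomial.smul_eq_eval₂_smul {M : Type*} [AddCommGroup M] [Module ℤ[T;T⁻¹] M]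
    {u : ℤˣ} (h : ∀ y : M, (T 1 : ℤ[T;T⁻¹]) • y = (u : ℤ) • y) (r : ℤ[T;T⁻¹]) (y : M) :
    r • y = eval₂ (RingHom.id ℤ) u r • y := by
  have : Module.toAddMonoidEnd ℤ[T;T⁻¹] M = (Int.castRingHom _).comp (eval₂ (RingHom.id ℤ) u) :=
    ringHom_ext (RingHom.ext_int _ _) (by ext y; exact (h y).trans (by simp))
  exact congr($this r y)

namespace VirtualTrefoil

noncomputable abbrev relations : Submodule ℤ[T;T⁻¹] (ℤ[T;T⁻¹] × ℤ[T;T⁻¹]) :=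
  Submodule.span ℤ[T;T⁻¹] {(1, T 1 - 1), (-T 1, 1), (1 - T (-1), T (-1))}

abbrev AlexanderModule := (ℤ[T;T⁻¹] × ℤ[T;T⁻¹]) ⧸ relations

noncomputable def generator : AlexanderModule := Submodule.Quotient.mk (1, 0)

theorem mk_eq_smul_generator (p q : ℤ[T;T⁻¹]) :
    (Submodule.Quotient.mk (p, q) : AlexanderModule) = (p + T 1 * q) • generator := by
  rw [generator, ← Submodule.Quotient.mk_smul, Submodule.Quotient.eq]
  have : (p, q) - (p + T 1 * q) • ((1, 0) : ℤ[T;T⁻¹] × ℤ[T;T⁻¹]) = q • (-T 1, 1) := by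
    ext <;> simp
  rw [this]
  exact Submodule.smul_mem _ _ (Submodule.subset_span (by simp))

theorem exists_eq_smul_generator (x : AlexanderModule) : ∃ r : ℤ[T;T⁻¹], x = r • generator := by
  obtain ⟨⟨p, q⟩, rfl⟩ := Submodule.Quotient.mk_surjective _ x
  exact ⟨_, mk_eq_smul_generator p q⟩

theorem smul_generator_eq_zero_of_mem (p q : ℤ[T;T⁻¹]) (h : (p, q) ∈ relations) :
    (p + T 1 * q) • generator = 0 := by
  rwa [← mk_eq_smul_generator, Submodule.Quotient.mk_eq_zero]

theorem two_mul_T_sub_one_smul_generator : (2 * T 1 - 1 : ℤ[T;T⁻¹]) • generator = 0 := by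
  have hT : (T 1 * T (-1) : ℤ[T;T⁻¹]) = 1 := by rw [← T_add]; norm_num
  have h := smul_generator_eq_zero_of_mem (1 - T (-1)) (T (-1)) (Submodule.subset_span (by simp))
  rw [show (2 * T 1 - 1 : ℤ[T;T⁻¹]) = T 1 * (1 - T (-1) + T 1 * T (-1)) by
    linear_combination (1 - T 1) * hT, mul_smul, h, smul_zero]

theorem three_smul_generator : (3 : ℤ[T;T⁻¹]) • generator = 0 := by
  have h := smul_generator_eq_zero_of_mem 1 (T 1 - 1) (Submodule.subset_span (by simp))
  linear_combination (norm := module)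
    (4 : ℤ[T;T⁻¹]) • h - (2 * T 1 - 1 : ℤ[T;T⁻¹]) • two_mul_T_sub_one_smul_generator

theorem T_add_one_smul_generator : (T 1 + 1 : ℤ[T;T⁻¹]) • generator = 0 := by
  linear_combination (norm := module)
    (2 : ℤ[T;T⁻¹]) • two_mul_T_sub_one_smul_generator + (1 - T 1 : ℤ[T;T⁻¹]) • three_smul_generator

theorem T_smul (x : AlexanderModule) : (T 1 : ℤ[T;T⁻¹]) • x = -x := by
  obtain ⟨r, rfl⟩ := exists_eq_smul_generator x
  linear_combination (norm := module) r • T_add_one_smul_generator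

theorem three_nsmul (x : AlexanderModule) : 3 • x = 0 := by
  obtain ⟨r, rfl⟩ := exists_eq_smul_generator x
  linear_combination (norm := module) r • three_smul_generator

theorem zmultiples_generator : AddSubgroup.zmultiples generator = ⊤ := by
  refine eq_top_iff.2 fun x _ => ?_
  obtain ⟨r, rfl⟩ := exists_eq_smul_generator x
  exact ⟨_, (smul_eq_eval₂_smul (u := -1) (fun y => by simpa using T_smul y) r generator).symm⟩

theorem generator_ne_zero : generator ≠ 0 := by
  let ψ : ℤ[T;T⁻¹] →+* ZMod 3 := eval₂ (Int.castRingHom (ZMod 3)) (-1)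
  let L := LinearMap.fst ℤ[T;T⁻¹] ℤ[T;T⁻¹] ℤ[T;T⁻¹] +
    (T 1 : ℤ[T;T⁻¹]) • LinearMap.snd ℤ[T;T⁻¹] ℤ[T;T⁻¹] ℤ[T;T⁻¹]
  have hle : relations ≤ Submodule.comap L (RingHom.ker ψ) := by
    rw [Submodule.span_le]
    simp only [Set.insert_subset_iff, Set.singleton_subset_iff, SetLike.mem_coe,
      Submodule.mem_comap, RingHom.mem_ker, L, ψ, LinearMap.add_apply, LinearMap.smul_apply,
      LinearMap.fst_apply, LinearMap.snd_apply, smul_eq_mul, map_add, map_sub, map_one, map_neg,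
      map_mul, eval₂_T, zpow_one, zpow_neg_one, inv_neg, inv_one, Units.val_neg, Units.val_one]
    decide
  intro h
  simpa [ψ, L] using hle ((Submodule.Quotient.mk_eq_zero _).1 h)

theorem card_alexanderModule : Nat.card AlexanderModule = 3 := by
  rw [← AddSubgroup.card_top, ← zmultiples_generator, Nat.card_zmultiples]
  exact addOrderOf_eq_prime (three_nsmul generator) generator_ne_zero

end VirtualTrefoil

/-- The reduced Alexander module of the virtual trefoil: over
`R = ℤ[t, t⁻¹]`, the quotient of `R × R` by the submodule spanned by
`(1, t - 1)`, `(-t, 1)` and `(1 - t⁻¹, t⁻¹)` has exactly 3 elements, and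
`t • x = x + x` for every element `x` of the quotient. -/
theorem stmt7
    (N : Submodule (LaurentPolynomial ℤ) (LaurentPolynomial ℤ × LaurentPolynomial ℤ))
    (hN : N = Submodule.span (LaurentPolynomial ℤ)
      {(1, T 1 - 1), (-T 1, 1), (1 - T (-1), T (-1))}) :
    Nat.card ((LaurentPolynomial ℤ × LaurentPolynomial ℤ) ⧸ N) = 3 ∧
      ∀ x : (LaurentPolynomial ℤ × LaurentPolynomial ℤ) ⧸ N,
        (T 1 : LaurentPolynomial ℤ) • x = x + x := by
  subst hN
  refine ⟨VirtualTrefoil.card_alexanderModule, fun x => ?_⟩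
  rw [VirtualTrefoil.T_smul]
  linear_combination (norm := module) -VirtualTrefoil.three_nsmul x
end

section
/- In ℤ/3ℤ with the dihedral quandle operation x ◃ y := 2·y - x, the following two assertions hold. (i) There exist a, b, c, d ∈ ℤ/3ℤ, not all equal, satisfying a = b ◃ d, b = c ◃ d, c = d ◃ b, and d = a ◃ b. (ii) For all a, b, c, d ∈ ℤ/3ℤ satisfying a = a ◃ a, c = b ◃ c, d = c ◃ c, and a = d ◃ a, one has a = b = c = d. -/
/-- The dihedral (Fox three-coloring) quandle operation on `ℤ/3ℤ`. -/
def triOp (x y : ZMod 3) : ZMod 3 := 2 * y - x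

/-- (i) The quandle relations of the virtual knot `K` of Figure 12 admit a
non-constant three-coloring, while (ii) every three-coloring satisfying the
quandle relations of its mirror image `K*` is constant. -/
theorem stmt8 :
    (∃ a b c d : ZMod 3, ¬(a = b ∧ b = c ∧ c = d) ∧
      a = triOp b d ∧ b = triOp c d ∧ c = triOp d b ∧ d = triOp a b) ∧
    (∀ a b c d : ZMod 3,
      a = triOp a a → c = triOp b c → d = triOp c c → a = triOp d a →
      a = b ∧ b = c ∧ c = d) := by
  constructor
  · exact ⟨0, 1, 0, 2, by decide, by decide, by decide, by decide, by decide⟩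
  · decide
end
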